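/- arXiv:1904.08544 — 3 statements merged into one kernel-verified Lean document; each statement's English description precedes it below -/
import Mathlib

section
/- Let d ≥ 2 and let k be an integer with d/2 ≤ k ≤ d. Let z₁, …, z_k be i.i.d. Gaussian random variables with mean 0 and variance 1/d, and let ε ∈ (0,1]. Then Pr[ Σ_{j=1}^k z_j² ≤ ε²/64 ] ≤ ε^{d/4}. -/
open MeasureTheory ProbabilityTheory Real
open scoped NNReal

/-!
Lower-tail Chernoff bound: for `λ ≥ 0`, `Pr[∑ z_j² ≤ r] ≤ e^{λr} 𝔼 e^{-λ ∑ z_j²}`, and by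
independence the expectation factors into `k` copies of the Gaussian integral
`𝔼 e^{-λ z²} = (1 + 2λv)^{-1/2}`. Taking `λ = d/ε`, `v = 1/d`, `r = ε²/64` gives the bound
`e^{dε/64} (ε/(ε+2))^{k/2} ≤ (e^{ε/16} ε/2)^{d/4}`, using `k/2 ≥ d/4` and `ε/2 ≤ 1`; finally
`e^{ε/16} ≤ 2` for `ε ≤ 1`.
-/

lemma mgf_sq_gaussianReal {v : ℝ≥0} (hv : v ≠ 0) {t : ℝ} (ht : 2 * t * v < 1) :
    mgf (fun x => x ^ 2) (gaussianReal 0 v) t = (√(1 - 2 * t * v))⁻¹ := by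
  have hv0 : (0 : ℝ) < v := by positivity
  set b : ℝ := 1 / (2 * v) - t with hb
  have hb0 : 0 < b := by
    rw [hb, sub_pos, lt_div_iff₀ (by positivity)]; linarith
  have hdensity : ∀ x : ℝ, gaussianPDFReal 0 v x • rexp (t * x ^ 2)
      = (√(2 * π * v))⁻¹ * rexp (-b * x ^ 2) := by
    intro x
    rw [gaussianPDFReal, smul_eq_mul, mul_assoc, ← Real.exp_add, hb]
    congr 2
    field_simp
    ring
  rw [mgf, integral_gaussianReal_eq_integral_smul hv]
  simp_rw [hdensity]
  rw [integral_const_mul, integral_gaussian, ← Real.sqrt_inv, ← Real.sqrt_mul (by positivity),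
    ← Real.sqrt_inv]
  congr 1
  rw [hb]
  field_simp

lemma mgf_sum_apply_pi {ι Ω : Type*} [Fintype ι] [MeasurableSpace Ω] {μ : Measure Ω}
    [IsProbabilityMeasure μ] {X : Ω → ℝ} (hX : Measurable X) (t : ℝ) :
    mgf (fun ω : ι → Ω => ∑ i, X (ω i)) (Measure.pi fun _ => μ) t
      = mgf X μ t ^ Fintype.card ι := by
  have hcoord : ∀ i, mgf (fun ω : ι → Ω => X (ω i)) (Measure.pi fun _ => μ) t = mgf X μ t := by
    intro i
    have hmap := integral_map (μ := Measure.pi fun _ : ι => μ) (f := fun x => rexp (t * X x))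
      (measurable_pi_apply i).aemeasurable (by fun_prop)
    rw [(measurePreserving_eval _ i).map_eq] at hmap
    exact hmap.symm
  have hsum := (iIndepFun_pi (μ := fun _ : ι => μ) (X := fun _ => X)
    fun _ => hX.aemeasurable).mgf_sum (t := t) (fun i => hX.comp (measurable_pi_apply i))
    Finset.univ
  rwa [Finset.sum_fn, Finset.prod_congr rfl fun i _ => hcoord i, Finset.prod_const,
    Finset.card_univ] at hsum

lemma measureReal_sum_sq_le_le_exp_mul_pow {ι : Type*} [Fintype ι] {v : ℝ≥0} (hv : v ≠ 0)
    (r : ℝ) {l : ℝ} (hl : 0 ≤ l) :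
    (Measure.pi fun _ : ι => gaussianReal 0 v).real {z | ∑ i, z i ^ 2 ≤ r}
      ≤ exp (l * r) * (√(1 + 2 * l * v))⁻¹ ^ Fintype.card ι := by
  have hint : Integrable (fun z : ι → ℝ => exp (-l * ∑ i, z i ^ 2))
      (Measure.pi fun _ : ι => gaussianReal 0 v) := by
    refine Integrable.of_bound (Measurable.aestronglyMeasurable (by fun_prop)) 1
      (ae_of_all _ fun z => ?_)
    rw [Real.norm_of_nonneg (exp_nonneg _), exp_le_one_iff, neg_mul]
    exact neg_nonpos.2 (mul_nonneg hl (by positivity))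
  have hchernoff := measure_le_le_exp_mul_mgf r (neg_nonpos.2 hl) hint
  rwa [mgf_sum_apply_pi (X := fun x => x ^ 2) (by fun_prop),
    mgf_sq_gaussianReal hv (by nlinarith [v.2]), neg_neg,
    show 1 - 2 * -l * (v : ℝ) = 1 + 2 * l * v by ring] at hchernoff

lemma exp_mul_inv_sqrt_pow_le_rpow {d ε : ℝ} {k : ℕ} (hk : d / 2 ≤ k) (hε0 : 0 < ε)
    (hε1 : ε ≤ 1) (hd : 0 ≤ d) :
    exp (d * ε / 64) * (√(1 + 2 / ε))⁻¹ ^ k ≤ ε ^ (d / 4) := by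
  have hbase : (√(1 + 2 / ε))⁻¹ ≤ (ε / 2) ^ (1 / 2 : ℝ) := by
    rw [← sqrt_eq_rpow, ← sqrt_inv]
    refine sqrt_le_sqrt (inv_le_of_inv_le₀ (by positivity) ?_)
    rw [inv_div]
    linarith [div_pos two_pos hε0]
  have hpow : (√(1 + 2 / ε))⁻¹ ^ k ≤ (ε / 2) ^ (d / 4) :=
    calc (√(1 + 2 / ε))⁻¹ ^ k ≤ ((ε / 2) ^ (1 / 2 : ℝ)) ^ k := by gcongr
      _ = (ε / 2) ^ ((k : ℝ) / 2) := by rw [← rpow_mul_natCast (by positivity)]; ring_nf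
      _ ≤ (ε / 2) ^ (d / 4) :=
        rpow_le_rpow_of_exponent_ge (by positivity) (by linarith) (by linarith)
  have hexp : exp (ε / 16) ≤ 2 :=
    calc exp (ε / 16) ≤ exp (log 2) := exp_le_exp.2 (by linarith [log_two_gt_d9])
      _ = 2 := exp_log two_pos
  calc exp (d * ε / 64) * (√(1 + 2 / ε))⁻¹ ^ k
      ≤ exp (ε / 16) ^ (d / 4) * (ε / 2) ^ (d / 4) := by
        rw [← exp_mul, show ε / 16 * (d / 4) = d * ε / 64 by ring]
        gcongr
    _ = (exp (ε / 16) * (ε / 2)) ^ (d / 4) := (mul_rpow (exp_nonneg _) (by positivity)).symm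
    _ ≤ ε ^ (d / 4) := by
        gcongr
        nlinarith

theorem gaussian_norm_small_ball_general (d k : ℕ) (hd : 2 ≤ d)
    (hk1 : (d : ℝ) / 2 ≤ (k : ℝ))
    (ε : ℝ) (hε0 : 0 < ε) (hε1 : ε ≤ 1) :
    (Measure.pi fun _ : Fin k => gaussianReal 0 ((d : ℝ≥0))⁻¹)
        {z : Fin k → ℝ | ∑ j, z j ^ 2 ≤ ε ^ 2 / 64}
      ≤ ENNReal.ofReal (ε ^ ((d : ℝ) / 4)) := by
  have hd0 : (d : ℝ) ≠ 0 := by positivity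
  rw [← ofReal_measureReal]
  refine ENNReal.ofReal_le_ofReal ?_
  calc _ ≤ exp (d / ε * (ε ^ 2 / 64)) * (√(1 + 2 * (d / ε) * ((d : ℝ≥0)⁻¹ : ℝ≥0)))⁻¹
          ^ Fintype.card (Fin k) :=
        measureReal_sum_sq_le_le_exp_mul_pow (by positivity) _ (by positivity)
    _ = exp (d * ε / 64) * (√(1 + 2 / ε))⁻¹ ^ k := by
        rw [Fintype.card_fin, show d / ε * (ε ^ 2 / 64) = d * ε / 64 by field_simp,
          show (1 : ℝ) + 2 * (d / ε) * ((d : ℝ≥0)⁻¹ : ℝ≥0) = 1 + 2 / ε by push_cast; field_simp]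
    _ ≤ ε ^ ((d : ℝ) / 4) := exp_mul_inv_sqrt_pow_le_rpow hk1 hε0 hε1 (Nat.cast_nonneg d)

/-- **Small-ball estimate.** If `z₁, …, z_k` are i.i.d. `N(0, 1/d)` with `d/2 ≤ k ≤ d` and
`d ≥ 2`, then `Pr[∑ z_j² ≤ ε²/64] ≤ ε^{d/4}` for every `ε ∈ (0, 1]`. -/
theorem gaussian_norm_small_ball (d k : ℕ) (hd : 2 ≤ d)
    (hk1 : (d : ℝ) / 2 ≤ (k : ℝ)) (hk2 : k ≤ d)
    (ε : ℝ) (hε0 : 0 < ε) (hε1 : ε ≤ 1) :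
    (Measure.pi fun _ : Fin k => gaussianReal 0 ((d : ℝ≥0))⁻¹)
        {z : Fin k → ℝ | ∑ j, z j ^ 2 ≤ ε ^ 2 / 64}
      ≤ ENNReal.ofReal (ε ^ ((d : ℝ) / 4)) :=
  gaussian_norm_small_ball_general d k hd hk1 ε hε0 hε1
end

section
/- Let d ≥ 2, let i be an integer with 0 ≤ i ≤ d/2, let W ⊆ ℝ^d be a linear subspace of dimension i, and let ε ∈ (0,1]. If x is drawn uniformly at random from the unit sphere S_d = {x ∈ ℝ^d : ‖x‖₂ = 1} and v denotes the orthogonal projection of x onto the orthogonal complement W^⊥, then Pr[ ‖v‖₂ ≤ ε^{1.5}/16 ] ≤ 2·ε^{d/4}. -/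
open MeasureTheory ProbabilityTheory Metric

/-- The surface measure σ on the unit sphere `S_d ⊆ ℝ^d`. -/
noncomputable def sphereMeasure (d : ℕ) :
    Measure (sphere (0 : EuclideanSpace ℝ (Fin d)) 1) :=
  (volume : Measure (EuclideanSpace ℝ (Fin d))).toSphere

/-- The uniform probability measure `U_d = σ / C_d` on the unit sphere. -/
noncomputable def uniformSphere (d : ℕ) :
    Measure (sphere (0 : EuclideanSpace ℝ (Fin d)) 1) :=
  (sphereMeasure d Set.univ)⁻¹ • sphereMeasure d

/-- The total surface area `C_d = σ(S_d)`. -/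
noncomputable def Cd (d : ℕ) : ℝ := (sphereMeasure d Set.univ).toReal

/-- The standard Gaussian measure `N(0, I_d)` on `ℝ^d`. -/
noncomputable def stdGaussian (d : ℕ) : Measure (EuclideanSpace ℝ (Fin d)) :=
  (Measure.pi fun _ : Fin d => gaussianReal 0 1).map
    (MeasurableEquiv.toLp 2 (Fin d → ℝ))

/-- The uniform probability measure on the interval `[-δ, δ]`. -/
noncomputable def unifIcc (δ : ℝ) : Measure ℝ :=
  (ENNReal.ofReal (2 * δ))⁻¹ • volume.restrict (Set.Icc (-δ) δ)

/-- The `ℓ₂` norm `‖f‖ = (E_{x ∼ U_d}[f(x)²])^{1/2}` of a density `f` on the sphere. -/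
noncomputable def l2norm (d : ℕ) (f : sphere (0 : EuclideanSpace ℝ (Fin d)) 1 → ℝ) : ℝ :=
  Real.sqrt (∫ x, (f x) ^ 2 ∂(uniformSphere d))

/-- `G_{f,a}(I_δ(b)) = Pr_{x ∼ f}[⟨a, x⟩ ∈ [b-δ, b+δ]]` for a density `f` on the sphere. -/
noncomputable def Gmass (d : ℕ) (f : sphere (0 : EuclideanSpace ℝ (Fin d)) 1 → ℝ)
    (a : EuclideanSpace ℝ (Fin d)) (b δ : ℝ) : ℝ :=
  ∫ x in {x : sphere (0 : EuclideanSpace ℝ (Fin d)) 1 |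
      inner ℝ a (x : EuclideanSpace ℝ (Fin d)) ∈ Set.Icc (b - δ) (b + δ)},
    f x ∂(sphereMeasure d)

/-!
The uniform measure of a set of unit vectors is the volume of the cone it spans inside the unit
ball, divided by the volume of that ball. For the event `‖P_K x‖ ≤ t` with `K = Wᗮ` this cone
lies in the cylinder `B_K(t) × B_{Kᗮ}(1)`, the image of `B_K(1) × B_{Kᗮ}(1) ⊆ B(0, 2)` under a
linear map of determinant `t ^ dim K`. Hence the probability is at most `t ^ dim K * 2 ^ d`, and
`dim K ≥ d / 2` makes this at most `ε ^ (d / 4)` for `t = ε ^ (3 / 2) / 16`.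
-/

open Set
open scoped ENNReal Pointwise

theorem MeasureTheory.Measure.toSphere_div_toSphere_univ {E : Type*} [NormedAddCommGroup E]
    [NormedSpace ℝ E] [FiniteDimensional ℝ E] [MeasurableSpace E] [BorelSpace E]
    (μ : Measure E) [μ.IsAddHaarMeasure] {s : Set (sphere (0 : E) 1)} (hs : MeasurableSet s) :
    μ.toSphere s / μ.toSphere univ = μ (Ioo (0 : ℝ) 1 • ((↑) '' s)) / μ (ball 0 1) := by
  rcases subsingleton_or_nontrivial E with hE | hE
  · have : IsEmpty (sphere (0 : E) 1) := by
      rw [sphere_eq_empty_of_subsingleton one_ne_zero]; infer_instance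
    simp [Set.eq_empty_of_isEmpty s]
  rw [μ.toSphere_apply' hs, μ.toSphere_apply_univ, ENNReal.mul_div_mul_left _ _
    (by simpa using Module.finrank_pos.ne') (by simp)]

namespace Submodule

variable {E : Type*} [NormedAddCommGroup E] [InnerProductSpace ℝ E] [FiniteDimensional ℝ E]
  (K : Submodule ℝ E)

def orthogonalCylinder (r : ℝ) : Set E :=
  K.prodEquivOfIsCompl Kᗮ K.isCompl_orthogonal '' (closedBall 0 r ×ˢ closedBall 0 1)

variable {K} in
theorem mem_orthogonalCylinder_of_norm_le {r : ℝ} {y : E}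
    (hKy : ‖(K.orthogonalProjectionOnto y : E)‖ ≤ r) (hy : ‖y‖ ≤ 1) :
    y ∈ K.orthogonalCylinder r := by
  rw [orthogonalCylinder, LinearEquiv.image_eq_preimage_symm]
  simp only [mem_preimage, prodEquivOfIsCompl_symm_apply]
  refine ⟨mem_closedBall_zero_iff.2 hKy, mem_closedBall_zero_iff.2 ?_⟩
  rw [← Submodule.norm_coe, coe_projectionOnto_apply, projection_eq_self_sub_projection]
  change ‖y - K.starProjection y‖ ≤ 1
  rw [← starProjection_orthogonal_val]
  exact (norm_starProjection_apply_le _ _).trans hy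

theorem Ioo_smul_setOf_norm_orthogonalProjectionOnto_le_subset {r : ℝ} (hr : 0 ≤ r) :
    Ioo (0 : ℝ) 1 • ((↑) '' {x : sphere (0 : E) 1 | ‖(K.orthogonalProjectionOnto x : E)‖ ≤ r})
      ⊆ K.orthogonalCylinder r := by
  rintro _ ⟨c, ⟨hc0, hc1⟩, _, ⟨x, hx, rfl⟩, rfl⟩
  have hx : ‖(K.orthogonalProjectionOnto x : E)‖ ≤ r := hx
  apply mem_orthogonalCylinder_of_norm_le
  · rw [map_smul, coe_smul, norm_smul, Real.norm_of_nonneg hc0.le]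
    nlinarith [norm_nonneg (K.orthogonalProjectionOnto x : E)]
  · rw [norm_smul, norm_eq_of_mem_sphere x, Real.norm_of_nonneg hc0.le]
    linarith

theorem orthogonalCylinder_one_subset : K.orthogonalCylinder 1 ⊆ closedBall 0 2 := by
  rintro _ ⟨⟨a, b⟩, ⟨ha, hb⟩, rfl⟩
  simp only [mem_closedBall_zero_iff] at *
  calc ‖(a : E) + b‖ ≤ ‖a‖ + ‖b‖ := norm_add_le _ _
    _ ≤ 2 := by norm_cast; linarith

variable [MeasurableSpace E] [BorelSpace E] (μ : Measure E) [μ.IsAddHaarMeasure]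

theorem addHaar_orthogonalCylinder {r : ℝ} (hr : 0 ≤ r) :
    μ (K.orthogonalCylinder r) =
      ENNReal.ofReal (r ^ Module.finrank ℝ K) * μ (K.orthogonalCylinder 1) := by
  set e := K.prodEquivOfIsCompl Kᗮ K.isCompl_orthogonal
  let D : K × Kᗮ →ₗ[ℝ] K × Kᗮ := (r • LinearMap.id).prodMap LinearMap.id
  have hD : D '' (closedBall 0 1 ×ˢ closedBall 0 1) = closedBall 0 r ×ˢ closedBall 0 1 := by
    rw [LinearMap.coe_prodMap, prodMap_image_prod, LinearMap.id_coe, image_id]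
    exact congrArg (· ×ˢ _) ((image_smul ..).trans (smul_unitClosedBall_of_nonneg hr))
  have hdet : LinearMap.det ((e : K × Kᗮ →ₗ[ℝ] E) ∘ₗ D ∘ₗ e.symm) = r ^ Module.finrank ℝ K := by
    rw [LinearMap.det_conj, LinearMap.det_prodMap, LinearMap.det_smul, LinearMap.det_id,
      LinearMap.det_id, mul_one, mul_one]
  have himage : K.orthogonalCylinder r =
      ((e : K × Kᗮ →ₗ[ℝ] E) ∘ₗ D ∘ₗ e.symm) '' K.orthogonalCylinder 1 := by
    rw [LinearMap.coe_comp, LinearMap.coe_comp, image_comp, image_comp]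
    change e '' _ = e '' (D '' (e.symm '' (e '' _)))
    simp only [image_image, LinearEquiv.symm_apply_apply, image_id', hD]
  rw [himage, Measure.addHaar_image_linearMap, hdet, abs_of_nonneg (by positivity)]

theorem addHaar_orthogonalCylinder_le {r : ℝ} (hr : 0 ≤ r) :
    μ (K.orthogonalCylinder r) ≤
      ENNReal.ofReal (r ^ Module.finrank ℝ K * 2 ^ Module.finrank ℝ E) * μ (ball 0 1) := by
  rw [addHaar_orthogonalCylinder K μ hr, ENNReal.ofReal_mul (by positivity), mul_assoc,
    ← Measure.addHaar_closedBall μ 0 zero_le_two]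
  gcongr
  exact K.orthogonalCylinder_one_subset

end Submodule

theorem uniformSphere_setOf_norm_orthogonalProjectionOnto_le (d : ℕ)
    (K : Submodule ℝ (EuclideanSpace ℝ (Fin d))) {r : ℝ} (hr : 0 ≤ r) :
    uniformSphere d {x | ‖(K.orthogonalProjectionOnto x : EuclideanSpace ℝ (Fin d))‖ ≤ r} ≤
      ENNReal.ofReal (r ^ Module.finrank ℝ K * 2 ^ d) := by
  set s := {x : sphere (0 : EuclideanSpace ℝ (Fin d)) 1 |
    ‖(K.orthogonalProjectionOnto x : EuclideanSpace ℝ (Fin d))‖ ≤ r}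
  set B := ball (0 : EuclideanSpace ℝ (Fin d)) 1
  have hs : MeasurableSet s := measurableSet_le (by fun_prop) measurable_const
  calc uniformSphere d s = volume (Ioo (0 : ℝ) 1 • (Subtype.val '' s)) / volume B := by
        rw [uniformSphere, Measure.smul_apply, smul_eq_mul, ← ENNReal.div_eq_inv_mul,
          sphereMeasure, Measure.toSphere_div_toSphere_univ _ hs]
    _ ≤ volume (K.orthogonalCylinder r) / volume B := by
        gcongr
        exact K.Ioo_smul_setOf_norm_orthogonalProjectionOnto_le_subset hr
    _ ≤ ENNReal.ofReal (r ^ Module.finrank ℝ K * 2 ^ d) * volume B / volume B := by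
        gcongr
        simpa using K.addHaar_orthogonalCylinder_le volume hr
    _ = ENNReal.ofReal (r ^ Module.finrank ℝ K * 2 ^ d) :=
        ENNReal.mul_div_cancel_right (measure_ball_pos _ _ one_pos).ne' measure_ball_lt_top.ne

open Real in
theorem rpow_three_halves_div_sixteen_pow_mul_two_pow_le {ε : ℝ} (hε0 : 0 < ε) (hε1 : ε ≤ 1)
    {d k : ℕ} (hk : (d : ℝ) / 2 ≤ k) :
    (ε ^ (1.5 : ℝ) / 16) ^ k * 2 ^ d ≤ ε ^ ((d : ℝ) / 4) := by
  set t := ε ^ (1.5 : ℝ) / 16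
  have ht0 : 0 < t := by positivity
  have h4t : 4 * t ≤ ε ^ (1 / 2 : ℝ) := by
    have hε_rpow : ε ^ (1.5 : ℝ) = ε ^ (1 / 2 : ℝ) * ε := by
      rw [← rpow_add_one hε0.ne']; norm_num
    have := mul_le_of_le_one_right (rpow_nonneg hε0.le (1 / 2 : ℝ)) hε1
    have := mul_pos (rpow_pos_of_pos hε0 (1 / 2 : ℝ)) hε0
    simp only [t, hε_rpow]; linarith
  have ht1 : t ≤ 1 := by
    have := rpow_le_one hε0.le hε1 (by norm_num : (0 : ℝ) ≤ 1 / 2); linarith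
  calc t ^ k * 2 ^ d = t ^ (k : ℝ) * 4 ^ ((d : ℝ) / 2) := by
        rw [rpow_natCast, show (4 : ℝ) = 2 ^ (2 : ℝ) by norm_num, ← rpow_mul (by norm_num),
          show (2 : ℝ) * (d / 2) = d by ring, rpow_natCast]
    _ ≤ t ^ ((d : ℝ) / 2) * 4 ^ ((d : ℝ) / 2) := by
        gcongr ?_ * _
        exact rpow_le_rpow_of_exponent_ge ht0 ht1 hk
    _ = (4 * t) ^ ((d : ℝ) / 2) := by rw [mul_comm, ← mul_rpow (by norm_num) ht0.le]
    _ ≤ (ε ^ (1 / 2 : ℝ)) ^ ((d : ℝ) / 2) := by gcongr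
    _ = ε ^ ((d : ℝ) / 4) := by rw [← rpow_mul hε0.le]; ring_nf

theorem uniform_sphere_projection_anti_concentration_general
    (d : ℕ) (i : ℕ) (hi : (i : ℝ) ≤ (d : ℝ) / 2)
    (W : Submodule ℝ (EuclideanSpace ℝ (Fin d))) (hW : Module.finrank ℝ W = i)
    (ε : ℝ) (hε0 : 0 < ε) (hε1 : ε ≤ 1) :
    uniformSphere d
        {x : sphere (0 : EuclideanSpace ℝ (Fin d)) 1 |
          ‖(Wᗮ.orthogonalProjectionOnto (x : EuclideanSpace ℝ (Fin d)) :
              EuclideanSpace ℝ (Fin d))‖ ≤ ε ^ (1.5 : ℝ) / 16}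
      ≤ ENNReal.ofReal (2 * ε ^ ((d : ℝ) / 4)) := by
  have hk : (d : ℝ) / 2 ≤ Module.finrank ℝ Wᗮ := by
    have := W.finrank_add_finrank_orthogonal
    rw [finrank_euclideanSpace_fin, hW] at this
    have : (i : ℝ) + Module.finrank ℝ Wᗮ = d := by exact_mod_cast this
    linarith
  calc _ ≤ ENNReal.ofReal ((ε ^ (1.5 : ℝ) / 16) ^ Module.finrank ℝ Wᗮ * 2 ^ d) :=
        uniformSphere_setOf_norm_orthogonalProjectionOnto_le d Wᗮ (by positivity)
    _ ≤ ENNReal.ofReal (2 * ε ^ ((d : ℝ) / 4)) := by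
        refine ENNReal.ofReal_le_ofReal ?_
        linarith [rpow_three_halves_div_sixteen_pow_mul_two_pow_le hε0 hε1 hk,
          Real.rpow_nonneg hε0.le ((d : ℝ) / 4)]

/-- **Uniform-sphere anti-concentration.** If `x` is uniform on the sphere `S_d ⊆ ℝ^d`
(`d ≥ 2`), `W` is a subspace of dimension `i ≤ d/2`, and `v` is the orthogonal projection of
`x` onto `W^⊥`, then `Pr[‖v‖ ≤ ε^{1.5}/16] ≤ 2 ε^{d/4}` for every `ε ∈ (0, 1]`. -/
theorem uniform_sphere_projection_anti_concentration
    (d : ℕ) (hd : 2 ≤ d) (i : ℕ) (hi : (i : ℝ) ≤ (d : ℝ) / 2)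
    (W : Submodule ℝ (EuclideanSpace ℝ (Fin d))) (hW : Module.finrank ℝ W = i)
    (ε : ℝ) (hε0 : 0 < ε) (hε1 : ε ≤ 1) :
    uniformSphere d
        {x : sphere (0 : EuclideanSpace ℝ (Fin d)) 1 |
          ‖(Wᗮ.orthogonalProjectionOnto (x : EuclideanSpace ℝ (Fin d)) :
              EuclideanSpace ℝ (Fin d))‖ ≤ ε ^ (1.5 : ℝ) / 16}
      ≤ ENNReal.ofReal (2 * ε ^ ((d : ℝ) / 4)) :=
  uniform_sphere_projection_anti_concentration_general d i hi W hW ε hε0 hε1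
end

section
/- Let n ≥ 1 be an integer and let ε ∈ (0,1]. Let X₁, …, X_n be independent {0,1}-valued random variables with Pr[X_j = 1] ≤ ε/4 for each j. Then Pr[ Σ_{j=1}^n X_j ≥ n/2 ] ≤ ε^{n/2}. -/
open MeasureTheory ProbabilityTheory

/-!
Round up to `k = ⌈n/2⌉`. If at least `k` of the events `{X_j = 1}` occur, then all events indexed
by some `k`-subset occur, so by independence and the union bound the probability is at most
`C(n, k) (ε/4)^k ≤ 2^n (ε/4)^k ≤ 4^k (ε/4)^k = ε^k ≤ ε^{n/2}`.
-/

open Finset ENNReal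

lemma Finset.sum_eq_card_filter_eq_one {ι R : Type*} [AddCommMonoidWithOne R] [DecidableEq R]
    {s : Finset ι} {f : ι → R} (hf : ∀ i ∈ s, f i = 0 ∨ f i = 1) :
    ∑ i ∈ s, f i = #{i ∈ s | f i = 1} := by
  rw [Finset.natCast_card_filter]
  refine Finset.sum_congr rfl fun i hi ↦ ?_
  rcases hf i hi with h | h <;> simp [h]

lemma ProbabilityTheory.iIndepSets.measure_setOf_le_card_le_choose_mul_pow
    {Ω ι : Type*} [MeasurableSpace Ω] {P : Measure Ω} [Fintype ι]
    {A : ι → Set Ω} [∀ j, DecidablePred (· ∈ A j)] (hA : iIndepSets (fun j ↦ {A j}) P)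
    {p : ℝ≥0∞} (hp : ∀ j, P (A j) ≤ p) (k : ℕ) :
    P {ω | k ≤ #{j | ω ∈ A j}} ≤ (Fintype.card ι).choose k * p ^ k := by
  have hcover : {ω | k ≤ #{j | ω ∈ A j}} ⊆ ⋃ S ∈ univ.powersetCard k, ⋂ j ∈ S, A j := by
    intro ω hω
    obtain ⟨S, hS, hScard⟩ := Finset.exists_subset_card_eq hω
    refine Set.mem_iUnion₂.2 ⟨S, mem_powersetCard.2 ⟨subset_univ S, hScard⟩, ?_⟩
    exact Set.mem_iInter₂.2 fun j hj ↦ (mem_filter.1 (hS hj)).2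
  calc P {ω | k ≤ #{j | ω ∈ A j}}
      ≤ ∑ S ∈ univ.powersetCard k, P (⋂ j ∈ S, A j) :=
        (measure_mono hcover).trans (measure_biUnion_finset_le _ _)
    _ ≤ ∑ _S ∈ univ.powersetCard k, p ^ k := by
        refine sum_le_sum fun S hS ↦ ?_
        rw [iIndepSets_singleton_iff.1 hA S, ← (mem_powersetCard.1 hS).2]
        exact prod_le_pow_card _ _ _ fun j _ ↦ hp j
    _ = (Fintype.card ι).choose k * p ^ k := by
        rw [sum_const, card_powersetCard, card_univ, nsmul_eq_mul]

lemma Nat.choose_mul_div_four_pow_le {n k : ℕ} (hnk : n ≤ 2 * k) {x : ℝ} (hx : 0 ≤ x) :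
    (n.choose k : ℝ) * (x / 4) ^ k ≤ x ^ k :=
  calc (n.choose k : ℝ) * (x / 4) ^ k
      ≤ 4 ^ k * (x / 4) ^ k := by
        gcongr
        calc (n.choose k : ℝ) ≤ 2 ^ n := by exact_mod_cast n.choose_le_two_pow k
          _ ≤ 2 ^ (2 * k) := pow_le_pow_right₀ one_le_two hnk
          _ = 4 ^ k := by rw [pow_mul]; norm_num
    _ = x ^ k := by rw [← mul_pow]; ring_nf

theorem chernoff_half_bound_general
    (n : ℕ) (ε : ℝ) (hε0 : 0 < ε) (hε1 : ε ≤ 1)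
    {Ω : Type*} [MeasurableSpace Ω] (P : Measure Ω)
    (X : Fin n → Ω → ℝ)
    (h01 : ∀ j ω, X j ω = 0 ∨ X j ω = 1)
    (hind : iIndepFun X P)
    (hp : ∀ j, P {ω | X j ω = 1} ≤ ENNReal.ofReal (ε / 4)) :
    P {ω | (n : ℝ) / 2 ≤ ∑ j, X j ω} ≤ ENNReal.ofReal (ε ^ ((n : ℝ) / 2)) := by
  classical
  set k := (n + 1) / 2
  have hk : (n : ℝ) / 2 ≤ k := by
    rw [div_le_iff₀ two_pos]
    exact_mod_cast (by omega : n ≤ k * 2)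
  have hA : iIndepSets (fun j ↦ {{ω | X j ω = 1}}) P :=
    iIndepSets_singleton_iff.2 fun _ ↦
      hind.meas_biInter fun _ _ ↦ ⟨{1}, measurableSet_singleton 1, rfl⟩
  have hsub : {ω | (n : ℝ) / 2 ≤ ∑ j, X j ω} ⊆ {ω | k ≤ #{j | ω ∈ {ω | X j ω = 1}}} := by
    intro ω hω
    have hcard : (n : ℝ) / 2 ≤ #{j | X j ω = 1} :=
      (sum_eq_card_filter_eq_one fun j _ ↦ h01 j ω) ▸ hω
    have : n ≤ 2 * #{j | X j ω = 1} := by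
      exact_mod_cast (by linarith : (n : ℝ) ≤ 2 * (#{j | X j ω = 1} : ℕ))
    change k ≤ #{j | X j ω = 1}
    omega
  calc P {ω | (n : ℝ) / 2 ≤ ∑ j, X j ω}
      ≤ n.choose k * ENNReal.ofReal (ε / 4) ^ k := by
        simpa only [Fintype.card_fin] using (measure_mono hsub).trans (hA.measure_setOf_le_card_le_choose_mul_pow hp k)
    _ = ENNReal.ofReal (n.choose k * (ε / 4) ^ k) := by
        rw [ENNReal.ofReal_mul (by positivity), ENNReal.ofReal_natCast,
          ENNReal.ofReal_pow (by positivity)]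
    _ ≤ ENNReal.ofReal (ε ^ ((n : ℝ) / 2)) := by
        refine ENNReal.ofReal_le_ofReal ?_
        calc (n.choose k : ℝ) * (ε / 4) ^ k
            ≤ ε ^ k := Nat.choose_mul_div_four_pow_le (by omega) hε0.le
          _ = ε ^ (k : ℝ) := (Real.rpow_natCast ε k).symm
          _ ≤ ε ^ ((n : ℝ) / 2) := Real.rpow_le_rpow_of_exponent_ge hε0 hε1 hk

/-- **Chernoff-type bound.** If `X₁, …, X_n` are independent `{0,1}`-valued random variables
with `Pr[X_j = 1] ≤ ε/4` for each `j` and `ε ∈ (0, 1]`, then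
`Pr[∑ X_j ≥ n/2] ≤ ε^{n/2}`. -/
theorem chernoff_half_bound
    (n : ℕ) (hn : 1 ≤ n) (ε : ℝ) (hε0 : 0 < ε) (hε1 : ε ≤ 1)
    {Ω : Type*} [MeasurableSpace Ω] (P : Measure Ω) [IsProbabilityMeasure P]
    (X : Fin n → Ω → ℝ) (hmeas : ∀ j, Measurable (X j))
    (h01 : ∀ j ω, X j ω = 0 ∨ X j ω = 1)
    (hind : iIndepFun X P)
    (hp : ∀ j, P {ω | X j ω = 1} ≤ ENNReal.ofReal (ε / 4)) :
    P {ω | (n : ℝ) / 2 ≤ ∑ j, X j ω} ≤ ENNReal.ofReal (ε ^ ((n : ℝ) / 2)) :=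
  chernoff_half_bound_general n ε hε0 hε1 P X h01 hind hp
end
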